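/- arXiv:2303.02553 — 2 statements merged into one kernel-verified Lean document; each statement's English description precedes it below -/
import Mathlib

section
/- Let N ≥ 2 and let d_1, ..., d_N be positive integers with d_max = max{d_1,...,d_N} and D = d_1⋯d_N. Then ⌈(∑_{m=1}^N D/d_m - 1)/(N-1)⌉ ≥ D/d_max + ⌊(D/d_max - 2)/(N-1)⌋ + 1. -/
/-!
Write `P = D/d_max` and `S = ∑ D/d_m`. Maximality of `d_max` gives `P ≤ D/d_m` for every `m`,
hence `N P ≤ S`. With `f = ⌊(P - 2)/(N - 1)⌋` we get `(P + f)(N - 1) ≤ N P - 2 ≤ S - 2 < S - 1`,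
so the integer `P + f` lies strictly below `(S - 1)/(N - 1)`, and `P + f + 1` is at most its ceiling.
-/

open Finset

theorem Finset.prod_erase_le_prod_erase {ι R : Type*} [DecidableEq ι] [CommSemiring R]
    [PartialOrder R] [IsOrderedRing R] {s : Finset ι} {f : ι → R} (hf : ∀ i ∈ s, 0 ≤ f i)
    {a b : ι} (ha : a ∈ s) (hb : b ∈ s) (hab : f a ≤ f b) :
    ∏ i ∈ s.erase b, f i ≤ ∏ i ∈ s.erase a, f i := by
  rcases eq_or_ne a b with rfl | hne
  · rfl
  have hrest : 0 ≤ ∏ i ∈ (s.erase a).erase b, f i :=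
    prod_nonneg fun i hi => hf i (mem_of_mem_erase (mem_of_mem_erase hi))
  rw [← mul_prod_erase _ f (mem_erase.2 ⟨hne, ha⟩),
    ← mul_prod_erase _ f (mem_erase.2 ⟨hne.symm, hb⟩), erase_right_comm]
  exact mul_le_mul_of_nonneg_right hab hrest

theorem add_floor_add_one_le_ceil {K : Type*} [Field K] [LinearOrder K] [IsStrictOrderedRing K]
    [FloorRing K] {n : ℤ} {k S : K} (hk : 0 < k) (hS : (k + 1) * n ≤ S) :
    (n : K) + ⌊(n - 2) / k⌋ + 1 ≤ ⌈(S - 1) / k⌉ := by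
  have hfloor : (⌊(n - 2) / k⌋ : K) * k ≤ n - 2 := (le_div_iff₀ hk).1 (Int.floor_le _)
  have hlt : ((n + ⌊((n : K) - 2) / k⌋ : ℤ) : K) < (S - 1) / k := by
    rw [lt_div_iff₀ hk]
    push_cast
    linarith
  exact_mod_cast Int.add_one_le_of_lt (Int.lt_ceil.2 hlt)

theorem stmt_3_general (N : ℕ) (hN : 2 ≤ N) (d : Fin N → ℕ)
    (m0 : Fin N) (hm0 : ∀ i, d i ≤ d m0) :
    ((∏ i ∈ Finset.univ.erase m0, (d i : ℚ)) +
        ⌊((∏ i ∈ Finset.univ.erase m0, (d i : ℚ)) - 2) / ((N : ℚ) - 1)⌋ + 1 : ℚ) ≤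
      ⌈((∑ m, ∏ i ∈ Finset.univ.erase m, (d i : ℚ)) - 1) / ((N : ℚ) - 1)⌉ := by
  have hk : (0 : ℚ) < N - 1 := by
    have : (2 : ℚ) ≤ N := by exact_mod_cast hN
    linarith
  have hS : ((N : ℚ) - 1 + 1) * ∏ i ∈ univ.erase m0, (d i : ℚ) ≤
      ∑ m, ∏ i ∈ univ.erase m, (d i : ℚ) := by
    have hsum := card_nsmul_le_sum univ (fun m => ∏ i ∈ univ.erase m, (d i : ℚ)) _ fun m _ =>
      prod_erase_le_prod_erase (fun i _ => Nat.cast_nonneg (d i)) (mem_univ m) (mem_univ m0)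
        (Nat.cast_le.2 (hm0 m))
    rwa [card_univ, Fintype.card_fin, nsmul_eq_mul, ← sub_add_cancel (N : ℚ) 1] at hsum
  have key := add_floor_add_one_le_ceil (n := ∏ i ∈ univ.erase m0, (d i : ℤ)) hk
    (by push_cast; exact hS)
  push_cast at key
  exact key

theorem stmt_3 (N : ℕ) (hN : 2 ≤ N) (d : Fin N → ℕ) (hd : ∀ m, 0 < d m)
    (m0 : Fin N) (hm0 : ∀ i, d i ≤ d m0) :
    ((∏ i ∈ Finset.univ.erase m0, (d i : ℚ)) +
        ⌊((∏ i ∈ Finset.univ.erase m0, (d i : ℚ)) - 2) / ((N : ℚ) - 1)⌋ + 1 : ℚ) ≤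
      ⌈((∑ m, ∏ i ∈ Finset.univ.erase m, (d i : ℚ)) - 1) / ((N : ℚ) - 1)⌉ :=
  stmt_3_general N hN d m0 hm0
end

section
/- Let N ≥ 2, let d_1,...,d_N be positive integers with D = d_1⋯d_N, and suppose at least one d_m is even and S := ∑_{m=1}^N D/d_m - 1 is an odd multiple of N-1, i.e. S = (N-1)k' with k' odd. Suppose there exist graphs G_1,...,G_N on a common vertex set of size k' whose union is K_{k'} and such that each vertex of G_m has degree at most k' - D/d_m. Then a contradiction follows; equivalently, no such family of graphs exists. -/
/-!
Every vertex of `K_{k'}` has degree `k' - 1`, and the degree bounds `k' - D/d_m` add up to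
exactly `N k' - (S + 1) = k' - 1`. So the `G_m` cover the neighbourhood of each vertex with no room
to spare: every `G_m` is `(k' - D/d_m)`-regular. If `d_m` is even, then `D/d_{m'}` is even for
any `m' ≠ m`, so `G_{m'}` is regular of odd degree on an odd number of vertices, which the
handshaking lemma forbids.
-/

open Finset

namespace SimpleGraph

variable {V ι : Type*} [Fintype V] [Fintype ι]

theorem card_sub_one_le_sum_degree_of_iSup_eq_top [DecidableEq V] (G : ι → SimpleGraph V)
    [∀ m, DecidableRel (G m).Adj] (hU : ⨆ m, G m = ⊤) (v : V) :
    Fintype.card V - 1 ≤ ∑ m, (G m).degree v := by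
  have hcover : (⊤ : SimpleGraph V).neighborFinset v ⊆ univ.biUnion (G · |>.neighborFinset v) := by
    intro w hw
    rw [mem_neighborFinset, ← hU, iSup_adj] at hw
    obtain ⟨m, hm⟩ := hw
    exact mem_biUnion.2 ⟨m, mem_univ m, (mem_neighborFinset _ _ _).2 hm⟩
  calc Fintype.card V - 1 = (⊤ : SimpleGraph V).degree v := (complete_graph_degree v).symm
    _ ≤ #(univ.biUnion (G · |>.neighborFinset v)) := card_le_card hcover
    _ ≤ ∑ m, (G m).degree v := card_biUnion_le

theorem degree_eq_of_iSup_eq_top_of_sum_eq (G : ι → SimpleGraph V) [∀ m, DecidableRel (G m).Adj]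
    (hU : ⨆ m, G m = ⊤) (b : ι → ℤ) (hb : ∑ m, b m = Fintype.card V - 1)
    (hdeg : ∀ m v, ((G m).degree v : ℤ) ≤ b m) (m : ι) (v : V) :
    ((G m).degree v : ℤ) = b m := by
  classical
  have hcard : Fintype.card V - 1 ≤ ∑ m, (G m).degree v :=
    card_sub_one_le_sum_degree_of_iSup_eq_top G hU v
  have hsum : ∑ m, ((G m).degree v : ℤ) = ∑ m, b m := by
    refine le_antisymm (sum_le_sum fun m _ ↦ hdeg m v) ?_
    have hcard_int : ((Fintype.card V - 1 : ℕ) : ℤ) ≤ ∑ m, ((G m).degree v : ℤ) := by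
      exact_mod_cast hcard
    rw [hb]
    omega
  exact (sum_eq_sum_iff_of_le fun m _ ↦ hdeg m v).1 hsum m (mem_univ m)

theorem even_card_of_forall_odd_degree (G : SimpleGraph V) [DecidableRel G.Adj]
    (h : ∀ v, Odd (G.degree v)) : Even (Fintype.card V) := by
  simpa [h] using G.even_card_odd_degree_vertices

end SimpleGraph

theorem even_prod_erase_of_even {ι R : Type*} [DecidableEq ι] [CommSemiring R] {s : Finset ι}
    {f : ι → R} {m m' : ι} (hm : m ∈ s) (hne : m ≠ m') (heven : Even (f m)) :
    Even (∏ i ∈ s.erase m', f i) :=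
  even_iff_two_dvd.2 <| (even_iff_two_dvd.1 heven).trans <| dvd_prod_of_mem f (mem_erase.2 ⟨hne, hm⟩)

theorem stmt_8_general (N k' : ℕ) (hN : 2 ≤ N) (d : Fin N → ℕ)
    (heven : ∃ m, Even (d m)) (hodd : Odd k')
    (hS : ((N : ℤ) - 1) * k' = (∑ m, ∏ i ∈ Finset.univ.erase m, (d i : ℤ)) - 1)
    (G : Fin N → SimpleGraph (Fin k'))
    [∀ m, DecidableRel (G m).Adj]
    (hU : (⨆ m, G m) = ⊤)
    (hdeg : ∀ m v, ((G m).degree v : ℤ) ≤ (k' : ℤ) - ∏ i ∈ Finset.univ.erase m, (d i : ℤ)) :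
    False := by
  obtain ⟨m, hm⟩ := heven
  have : Nontrivial (Fin N) := Fin.nontrivial_iff_two_le.2 hN
  obtain ⟨m', hm'⟩ := exists_ne m
  have hbounds : ∑ m, ((k' : ℤ) - ∏ i ∈ univ.erase m, (d i : ℤ)) = Fintype.card (Fin k') - 1 := by
    rw [sum_sub_distrib, sum_const, card_univ, Fintype.card_fin, Fintype.card_fin, nsmul_eq_mul]
    linarith
  have hprod_even : Even (∏ i ∈ univ.erase m', (d i : ℤ)) :=
    even_prod_erase_of_even (mem_univ m) hm'.symm hm.natCast
  have hodd_degree (v : Fin k') : Odd ((G m').degree v) := by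
    rw [← Int.odd_coe_nat,
      SimpleGraph.degree_eq_of_iSup_eq_top_of_sum_eq G hU _ hbounds hdeg m' v]
    exact hodd.natCast.sub_even hprod_even
  have := SimpleGraph.even_card_of_forall_odd_degree (G m') hodd_degree
  rw [Fintype.card_fin] at this
  exact Nat.not_even_iff_odd.2 hodd this

theorem stmt_8 (N k' : ℕ) (hN : 2 ≤ N) (d : Fin N → ℕ) (hd : ∀ m, 0 < d m)
    (heven : ∃ m, Even (d m)) (hodd : Odd k')
    (hS : ((N : ℤ) - 1) * k' = (∑ m, ∏ i ∈ Finset.univ.erase m, (d i : ℤ)) - 1)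
    (G : Fin N → SimpleGraph (Fin k'))
    [∀ m, DecidableRel (G m).Adj]
    (hU : (⨆ m, G m) = ⊤)
    (hdeg : ∀ m v, ((G m).degree v : ℤ) ≤ (k' : ℤ) - ∏ i ∈ Finset.univ.erase m, (d i : ℤ)) :
    False :=
  stmt_8_general N k' hN d heven hodd hS G hU hdeg
end
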